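/- arXiv:2109.02093 — 4 statements merged into one kernel-verified Lean document; each statement's English description precedes it below -/
import Mathlib

section
/- Let {α_k}, {β_k}, and {γ_k} be sequences of positive real numbers and suppose there exist constants c₁, c₂, c₃ > 0 and k₀ ∈ ℕ such that for all k ≥ k₀: (i) α_k − α_{k+1} ≥ c₁ β_k², (ii) β_k ≥ c₂ γ_k, and (iii) c₃ γ_k² ≥ α_k. Then the sequence {α_k} converges Q-linearly to zero, i.e., there exist q ∈ (0,1) and k₁ ∈ ℕ with α_{k+1} ≤ q α_k for all k ≥ k₁; and the sequences {β_k} and {γ_k} converge R-linearly to zero, i.e., for each of them there exist c > 0 and μ ∈ (0,1) such that the k-th term is at most c μᵏ for all large k. -/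
/-- estimates for convergence rates.
If positive sequences `α`, `β`, `γ` satisfy, for all `k ≥ k₀`,
(i) `α k - α (k+1) ≥ c₁ β k ^ 2`, (ii) `β k ≥ c₂ γ k`, (iii) `c₃ γ k ^ 2 ≥ α k`,
then `α` converges Q-linearly to zero and `β`, `γ` converge R-linearly to zero. -/
theorem stmt1 (α β γ : ℕ → ℝ)
    (hα : ∀ k, 0 < α k) (hβ : ∀ k, 0 < β k) (hγ : ∀ k, 0 < γ k)
    (c₁ c₂ c₃ : ℝ) (hc₁ : 0 < c₁) (hc₂ : 0 < c₂) (hc₃ : 0 < c₃) (k₀ : ℕ)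
    (h1 : ∀ k, k₀ ≤ k → c₁ * β k ^ 2 ≤ α k - α (k + 1))
    (h2 : ∀ k, k₀ ≤ k → c₂ * γ k ≤ β k)
    (h3 : ∀ k, k₀ ≤ k → α k ≤ c₃ * γ k ^ 2) :
    (∃ q ∈ Set.Ioo (0 : ℝ) 1, ∃ k₁ : ℕ, ∀ k, k₁ ≤ k → α (k + 1) ≤ q * α k) ∧
    (∃ c > (0 : ℝ), ∃ μ ∈ Set.Ioo (0 : ℝ) 1, ∃ k₁ : ℕ, ∀ k, k₁ ≤ k → β k ≤ c * μ ^ k) ∧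
    (∃ c > (0 : ℝ), ∃ μ ∈ Set.Ioo (0 : ℝ) 1, ∃ k₁ : ℕ, ∀ k, k₁ ≤ k → γ k ≤ c * μ ^ k) := by
  set q : ℝ := 1 - c₁ * c₂ ^ 2 / c₃ with hqdef
  have key : ∀ k, k₀ ≤ k → α (k + 1) ≤ q * α k := by
    intro k hk
    have A := h1 k hk
    have B := h2 k hk
    have C := h3 k hk
    have hγk := hγ k
    have hβk := hβ k
    have E : c₂ ^ 2 * γ k ^ 2 ≤ β k ^ 2 := by nlinarith [mul_pos hc₂ hγk]
    have F : c₁ * (c₂ ^ 2 * γ k ^ 2) ≤ α k - α (k + 1) := le_trans (by nlinarith) A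
    have G : c₁ * c₂ ^ 2 * α k ≤ c₁ * c₂ ^ 2 * (c₃ * γ k ^ 2) :=
      mul_le_mul_of_nonneg_left C (by positivity)
    have F' : c₃ * (c₁ * (c₂ ^ 2 * γ k ^ 2)) ≤ c₃ * (α k - α (k + 1)) :=
      mul_le_mul_of_nonneg_left F hc₃.le
    have hcase : c₃ * α (k + 1) ≤ (c₃ - c₁ * c₂ ^ 2) * α k := by nlinarith
    have hq : q * α k = (c₃ - c₁ * c₂ ^ 2) * α k / c₃ := by
      field_simp [hqdef]
      rw [hqdef]; field_simp <;> ring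
    rw [hq, le_div_iff₀ hc₃]
    linarith
  have hq1 : q < 1 := by
    have : 0 < c₁ * c₂ ^ 2 / c₃ := by positivity
    simp [hqdef]; linarith
  have hq0 : 0 < q := by
    have h := key k₀ le_rfl
    have h1 := hα (k₀ + 1)
    have h2 := hα k₀
    nlinarith
  have geo : ∀ n, α (k₀ + n) ≤ α k₀ * q ^ n := by
    intro n
    induction n with
    | zero => simp
    | succ n ih =>
      have h := key (k₀ + n) (Nat.le_add_right _ _)
      calc α (k₀ + (n + 1)) = α (k₀ + n + 1) := by ring_nf
        _ ≤ q * α (k₀ + n) := h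
        _ ≤ q * (α k₀ * q ^ n) := by
            exact mul_le_mul_of_nonneg_left ih hq0.le
        _ = α k₀ * q ^ (n + 1) := by ring
  have hqk0 : (0:ℝ) < q ^ k₀ := by positivity
  set C : ℝ := α k₀ / q ^ k₀ with hCdef
  have hC : 0 < C := by rw [hCdef]; exact div_pos (hα k₀) hqk0
  have bound : ∀ k, k₀ ≤ k → α k ≤ C * q ^ k := by
    intro k hk
    obtain ⟨n, rfl⟩ := Nat.exists_eq_add_of_le hk
    have := geo n
    have hpow : C * q ^ (k₀ + n) = α k₀ * q ^ n := by
      rw [hCdef, pow_add]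
      field_simp
    rw [hpow]; exact this
  set μ : ℝ := Real.sqrt q with hμdef
  have hμ0 : 0 < μ := Real.sqrt_pos.mpr hq0
  have hμ1 : μ < 1 := by
    rw [hμdef, show (1:ℝ) = Real.sqrt 1 by simp]
    exact Real.sqrt_lt_sqrt hq0.le hq1
  set cβ : ℝ := Real.sqrt (C / c₁) with hcβdef
  have hcβ : 0 < cβ := Real.sqrt_pos.mpr (by positivity)
  have βbound : ∀ k, k₀ ≤ k → β k ≤ cβ * μ ^ k := by
    intro k hk
    have A := h1 k hk
    have h1' := hα (k + 1)
    have hsq : β k ^ 2 ≤ (C * q ^ k) / c₁ := by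
      rw [le_div_iff₀ hc₁]
      have := bound k hk
      nlinarith
    have hb : β k ≤ Real.sqrt ((C * q ^ k) / c₁) := by
      rw [show β k = Real.sqrt (β k ^ 2) by
        rw [Real.sqrt_sq (hβ k).le]]
      exact Real.sqrt_le_sqrt hsq
    have heq : Real.sqrt ((C * q ^ k) / c₁) = cβ * μ ^ k := by
      have hsp : ∀ n : ℕ, Real.sqrt (q ^ n) = Real.sqrt q ^ n := by
        intro n
        induction n with
        | zero => simp
        | succ n ih => rw [pow_succ, pow_succ, Real.sqrt_mul (by positivity), ih]
      rw [hcβdef, hμdef, ← hsp, ← Real.sqrt_mul (by positivity)]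
      congr 1
      field_simp
    rw [← heq]; exact hb
  refine ⟨⟨q, ⟨hq0, hq1⟩, k₀, key⟩, ⟨cβ, hcβ, μ, ⟨hμ0, hμ1⟩, k₀, βbound⟩,
    ⟨cβ / c₂, by positivity, μ, ⟨hμ0, hμ1⟩, k₀, ?_⟩⟩
  intro k hk
  have B := h2 k hk
  have := βbound k hk
  rw [div_mul_eq_mul_div, le_div_iff₀ hc₂]
  nlinarith
end

section
/- Let φ : ℝⁿ → ℝ be differentiable on a neighborhood U of a point x̄ with ∇φ(x̄) = 0, and suppose the gradient mapping ∇φ is Lipschitz continuous on U with modulus ℓ > 0. Let {x^k} ⊂ ℝⁿ be a sequence converging to x̄ with x^k ≠ x̄ for all k, and let {d^k} ⊂ ℝⁿ satisfy ‖x^k + d^k − x̄‖ / ‖x^k − x̄‖ → 0 as k → ∞. Assume there exists κ > 0 such that φ(x^k + d^k) − φ(x^k) ≤ ⟨∇φ(x^k + d^k), d^k⟩ − (1/(2κ))‖d^k‖² for all sufficiently large k. Then for every σ ∈ (0, 1/(2ℓκ)) one has φ(x^k + d^k) ≤ φ(x^k) + σ ⟨∇φ(x^k), d^k⟩ for all sufficiently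 large k. -/
open Set Filter Topology RealInnerProductSpace

set_option maxHeartbeats 1000000 in
/-- acceptance of unit stepsize.
Let `φ` be differentiable on a neighborhood `U` of `xbar` with gradient map `g`
Lipschitz on `U` with modulus `ℓ > 0` and `g xbar = 0`. Let `x k → xbar` with
`x k ≠ xbar`, and let `d k` satisfy `‖x k + d k − xbar‖/‖x k − xbar‖ → 0`. If there is
`κ > 0` with `φ(x k + d k) − φ(x k) ≤ ⟪g (x k + d k), d k⟫ − ‖d k‖²/(2κ)` for all
large `k`, then for every `σ ∈ (0, 1/(2ℓκ))`,
`φ(x k + d k) ≤ φ(x k) + σ ⟪g (x k), d k⟫` for all large `k`. -/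
theorem stmt3 {n : ℕ} (φ : EuclideanSpace ℝ (Fin n) → ℝ)
    (g : EuclideanSpace ℝ (Fin n) → EuclideanSpace ℝ (Fin n))
    (xbar : EuclideanSpace ℝ (Fin n)) (U : Set (EuclideanSpace ℝ (Fin n)))
    (hU : U ∈ 𝓝 xbar)
    (hdiff : ∀ x ∈ U, HasGradientAt φ (g x) x)
    (hcrit : g xbar = 0)
    (ℓ : ℝ) (hℓ : 0 < ℓ)
    (hLip : ∀ x ∈ U, ∀ y ∈ U, ‖g x - g y‖ ≤ ℓ * ‖x - y‖)
    (x : ℕ → EuclideanSpace ℝ (Fin n))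
    (hconv : Filter.Tendsto x Filter.atTop (𝓝 xbar))
    (hne : ∀ k, x k ≠ xbar)
    (d : ℕ → EuclideanSpace ℝ (Fin n))
    (hd : Filter.Tendsto (fun k => ‖x k + d k - xbar‖ / ‖x k - xbar‖) Filter.atTop (𝓝 0))
    (κ : ℝ) (hκ : 0 < κ)
    (hgrowth : ∀ᶠ k in Filter.atTop,
      φ (x k + d k) - φ (x k) ≤ ⟪g (x k + d k), d k⟫ - 1 / (2 * κ) * ‖d k‖ ^ 2) :
    ∀ σ ∈ Set.Ioo (0 : ℝ) (1 / (2 * ℓ * κ)),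
      ∀ᶠ k in Filter.atTop, φ (x k + d k) ≤ φ (x k) + σ * ⟪g (x k), d k⟫ := by
  intro σ hσ
  obtain ⟨hσ0, hσ1⟩ := hσ
  have hℓκ : 0 < 2 * ℓ * κ := by positivity
  have hσℓκ : 2 * ℓ * κ * σ < 1 := by
    rw [lt_div_iff₀ hℓκ] at hσ1; linarith
  set ε : ℝ := (1 - 2 * ℓ * κ * σ) / (2 * ℓ * κ + 1) with hεdef
  have hε0 : 0 < ε := div_pos (by linarith) (by positivity)
  have key : 2 * ℓ * κ * (ε + σ) = 1 - ε := by
    have hden : 2 * ℓ * κ + 1 ≠ 0 := by positivity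
    have hmulε : ε * (2 * ℓ * κ + 1) = 1 - 2 * ℓ * κ * σ := by
      rw [hεdef]; exact div_mul_cancel₀ _ hden
    linear_combination hmulε
  have hε1 : ε < 1 := by nlinarith
  have hxnorm : Tendsto (fun k => ‖x k - xbar‖) atTop (𝓝 0) :=
    tendsto_iff_norm_sub_tendsto_zero.mp hconv
  have hynorm : Tendsto (fun k => ‖x k + d k - xbar‖) atTop (𝓝 0) := by
    have h := hd.mul hxnorm
    rw [mul_zero] at h
    refine h.congr fun k => ?_
    exact div_mul_cancel₀ _ (norm_ne_zero_iff.mpr (sub_ne_zero.mpr (hne k)))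
  have hyconv : Tendsto (fun k => x k + d k) atTop (𝓝 xbar) :=
    tendsto_iff_norm_sub_tendsto_zero.mpr hynorm
  have hxU : ∀ᶠ k in atTop, x k ∈ U := hconv.eventually_mem hU
  have hyU : ∀ᶠ k in atTop, x k + d k ∈ U := hyconv.eventually_mem hU
  have hεev : ∀ᶠ k in atTop, ‖x k + d k - xbar‖ / ‖x k - xbar‖ < ε :=
    hd.eventually (gt_mem_nhds hε0)
  filter_upwards [hgrowth, hxU, hyU, hεev] with k hg hx hy hεk
  set a : ℝ := ‖x k - xbar‖ with hadef
  set b : ℝ := ‖x k + d k - xbar‖ with hbdef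
  have ha : 0 < a := norm_pos_iff.mpr (sub_ne_zero.mpr (hne k))
  have hb : 0 ≤ b := norm_nonneg _
  have hba : b < ε * a := (div_lt_iff₀ ha).mp hεk
  have hdge : (1 - ε) * a ≤ ‖d k‖ := by
    have htri : a ≤ b + ‖d k‖ := by
      have : x k - xbar = (x k + d k - xbar) - d k := by abel
      rw [hadef, this]
      exact norm_sub_le _ _
    nlinarith
  have hgy : ‖g (x k + d k)‖ ≤ ℓ * b := by
    have := hLip _ hy _ (mem_of_mem_nhds hU)
    simpa [hcrit] using this
  have hgx : ‖g (x k)‖ ≤ ℓ * a := by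
    have := hLip _ hx _ (mem_of_mem_nhds hU)
    simpa [hcrit] using this
  have h1 : ⟪g (x k + d k), d k⟫ ≤ ℓ * b * ‖d k‖ := by
    calc ⟪g (x k + d k), d k⟫ ≤ ‖g (x k + d k)‖ * ‖d k‖ := real_inner_le_norm _ _
    _ ≤ ℓ * b * ‖d k‖ := mul_le_mul_of_nonneg_right hgy (norm_nonneg _)
  have h2 : -(ℓ * a * ‖d k‖) ≤ ⟪g (x k), d k⟫ := by
    have habs := abs_real_inner_le_norm (g (x k)) (d k)
    have : |⟪g (x k), d k⟫| ≤ ℓ * a * ‖d k‖ :=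
      habs.trans (mul_le_mul_of_nonneg_right hgx (norm_nonneg _))
    linarith [neg_abs_le ⟪g (x k), d k⟫]
  have hstep : ℓ * (b + σ * a) ≤ ‖d k‖ / (2 * κ) := by
    have h3 : ℓ * (b + σ * a) ≤ ℓ * ((ε + σ) * a) := by nlinarith
    have h4 : ℓ * ((ε + σ) * a) = (1 - ε) * a / (2 * κ) := by
      rw [eq_div_iff (by positivity : (2:ℝ) * κ ≠ 0)]
      linear_combination a * key
    have h5 : (1 - ε) * a / (2 * κ) ≤ ‖d k‖ / (2 * κ) := by
      gcongr
    linarith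
  have hmul : ℓ * (b + σ * a) * ‖d k‖ ≤ ‖d k‖ / (2 * κ) * ‖d k‖ :=
    mul_le_mul_of_nonneg_right hstep (norm_nonneg _)
  have h2' : -(σ * ⟪g (x k), d k⟫) ≤ σ * (ℓ * a * ‖d k‖) := by nlinarith
  have hmul' : ℓ * (b + σ * a) * ‖d k‖ ≤ 1 / (2 * κ) * ‖d k‖ ^ 2 := by
    have : ‖d k‖ / (2 * κ) * ‖d k‖ = 1 / (2 * κ) * ‖d k‖ ^ 2 := by ring
    linarith [hmul, this.le, this.ge]
  linarith [hg, h1, h2', hmul']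
end

section
/- Let n ≥ 1 and define f : ℝⁿ → ℝ by f(y) := max{ y₁, …, y_n }. Let x ∈ ℝⁿ and let s ∈ ℝ satisfy Σ_{i=1}^{n} max{0, xᵢ − s} = 1. Then the function y ↦ f(y) + (1/2)‖y − x‖² has a unique minimizer over ℝⁿ, namely the vector p with components pᵢ = min{ xᵢ, s } for i = 1,…,n; that is, Prox_f(x) = ( min{x₁, s}, …, min{x_n, s} ). -/
lemma my_normsq {n : ℕ} (v : EuclideanSpace ℝ (Fin n)) : ‖v‖^2 = ∑ i, (v i)^2 := by
  rw [EuclideanSpace.norm_eq, Real.sq_sqrt (Finset.sum_nonneg fun i _ => sq_nonneg _)]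
  simp [sq_abs]

/-- proximal mapping of the max function.
Let `f(y) = max{y₁,…,yₙ}` with `n ≥ 1`, and let `s` satisfy `∑ᵢ max{0, xᵢ − s} = 1`.
Then the vector `p` with `pᵢ = min{xᵢ, s}` is the unique minimizer over `ℝⁿ` of
`y ↦ f(y) + (1/2)‖y − x‖²`; that is, `Prox_f(x) = (min{x₁,s},…,min{xₙ,s})`. -/
theorem stmt9 {n : ℕ} (hn : 0 < n) (x : EuclideanSpace ℝ (Fin n)) (s : ℝ)
    (hs : ∑ i, max 0 (x i - s) = 1) :
    ∃ p : EuclideanSpace ℝ (Fin n),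
      (∀ i, p i = min (x i) s) ∧
      (∀ y : EuclideanSpace ℝ (Fin n),
        (⨆ i, p i) + 1 / 2 * ‖p - x‖ ^ 2 ≤ (⨆ i, y i) + 1 / 2 * ‖y - x‖ ^ 2) ∧
      (∀ q : EuclideanSpace ℝ (Fin n),
        (∀ y : EuclideanSpace ℝ (Fin n),
          (⨆ i, q i) + 1 / 2 * ‖q - x‖ ^ 2 ≤ (⨆ i, y i) + 1 / 2 * ‖y - x‖ ^ 2) →
        q = p) := by
  haveI : Nonempty (Fin n) := Fin.pos_iff_nonempty.mp hn
  set lam : Fin n → ℝ := fun i => max 0 (x i - s) with hlam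
  set p : EuclideanSpace ℝ (Fin n) := WithLp.toLp 2 (fun i => min (x i) s : Fin n → ℝ) with hp
  have hpi : ∀ i, p i = min (x i) s := fun i => rfl
  have hple : ∀ i, p i ≤ s := fun i => min_le_right _ _
  -- some lam i > 0
  have hex : ∃ i, 0 < lam i := by
    by_contra h
    push_neg at h
    have : ∑ i, lam i = 0 := le_antisymm (Finset.sum_nonpos fun i _ => h i)
      (Finset.sum_nonneg fun i _ => le_max_left _ _)
    rw [hs] at this; norm_num at this
  -- sup p = s
  have hsupp : (⨆ i, p i) = s := by
    obtain ⟨i, hi⟩ := hex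
    have hxi : s < x i := by
      by_contra h
      push_neg at h
      simp [hlam, max_eq_left (by linarith : x i - s ≤ 0)] at hi
    apply le_antisymm (ciSup_le hple)
    have := le_ciSup (Finite.bddAbove_range p) i
    rw [hpi i, min_eq_right hxi.le] at this
    exact this
  -- per-coordinate key identity
  have hkey : ∀ y : EuclideanSpace ℝ (Fin n), ∀ i,
      lam i * y i + 1/2 * (y i - x i)^2
        = 1/2 * (lam i)^2 + 1/2 * (y i - p i)^2 + lam i * s := by
    intro y i
    rcases le_total (x i) s with h | h
    · simp [hlam, hpi i, max_eq_left (by linarith : x i - s ≤ 0), min_eq_left h]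
    · simp only [hlam, hpi i, max_eq_right (by linarith : 0 ≤ x i - s), min_eq_right h]
      ring
  -- summed key identity
  have hsum : ∀ y : EuclideanSpace ℝ (Fin n),
      (∑ i, lam i * y i) + 1/2 * ‖y - x‖^2
        = 1/2 * ‖p - x‖^2 + 1/2 * ‖y - p‖^2 + s := by
    intro y
    have h1 : ‖y - x‖^2 = ∑ i, (y i - x i)^2 := by
      rw [my_normsq]; exact Finset.sum_congr rfl fun i _ => by simp
    have h2 : ‖y - p‖^2 = ∑ i, (y i - p i)^2 := by
      rw [my_normsq]; exact Finset.sum_congr rfl fun i _ => by simp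
    have h3 : ‖p - x‖^2 = ∑ i, (lam i)^2 := by
      rw [my_normsq]
      apply Finset.sum_congr rfl
      intro i _
      have : (p - x) i = p i - x i := by simp
      rw [this, hpi i]
      rcases le_total (x i) s with h | h
      · simp [hlam, max_eq_left (by linarith : x i - s ≤ 0), min_eq_left h]
      · simp only [hlam, max_eq_right (by linarith : 0 ≤ x i - s), min_eq_right h]
        ring
    have h4 : ∑ i, lam i * s = s := by
      rw [← Finset.sum_mul, hs, one_mul]
    rw [h1, h2, h3, ← h4, Finset.mul_sum, Finset.mul_sum, Finset.mul_sum,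
      ← Finset.sum_add_distrib, ← Finset.sum_add_distrib, ← Finset.sum_add_distrib]
    exact Finset.sum_congr rfl fun i _ => hkey y i
  -- main inequality: F p + 1/2 ‖y-p‖^2 ≤ F y
  have main : ∀ y : EuclideanSpace ℝ (Fin n),
      (⨆ i, p i) + 1/2 * ‖p - x‖^2 + 1/2 * ‖y - p‖^2
        ≤ (⨆ i, y i) + 1/2 * ‖y - x‖^2 := by
    intro y
    have hl : ∑ i, lam i * y i ≤ ⨆ i, y i := by
      calc ∑ i, lam i * y i ≤ ∑ i, lam i * (⨆ j, y j) := by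
            apply Finset.sum_le_sum
            intro i _
            exact mul_le_mul_of_nonneg_left (le_ciSup (Finite.bddAbove_range y) i)
              (le_max_left _ _)
        _ = ⨆ j, y j := by rw [← Finset.sum_mul, hs, one_mul]
    have := hsum y
    rw [hsupp]
    linarith
  refine ⟨p, hpi, fun y => by have := main y; nlinarith [sq_nonneg ‖y - p‖], ?_⟩
  intro q hq
  have h1 := hq p
  have h2 := main q
  have h3 : ‖q - p‖^2 ≤ 0 := by linarith
  have h4 : ‖q - p‖ = 0 := by nlinarith [norm_nonneg (q - p)]
  have := norm_eq_zero.mp h4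
  exact sub_eq_zero.mp this
end

section
/- Let A be a symmetric positive-semidefinite n×n real matrix, b ∈ ℝⁿ, α ∈ ℝ, and define f(x) := (1/2)⟨Ax, x⟩ + ⟨b, x⟩ + α. Let g : ℝⁿ → (−∞, +∞] be a proper lower semicontinuous convex function, let ℓ > 0 be a Lipschitz constant of the mapping x ↦ Ax + b, and let γ ∈ (0, 1/ℓ). Denote by λ_min(A) and λ_max(A) the smallest and largest eigenvalues of A, and set L := 2(1 − γ λ_min(A))/γ and K := min{ (1 − γ λ_min(A)) λ_min(A), (1 − γ λ_max(A)) λ_max(A) }. Then the forward-backward envelope φ_γ is real-valued and convex on ℝⁿ, φ_γ is differentiable on ℝⁿ, and its gradient mapping ∇φ_γ is Lipschitz continuous on ℝⁿ with constant L. If moreover A is positive-definite, then φ_γ is strongly convex with modulus K. -/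
open Set RealInnerProductSpace

/-- Convexity of an extended-real-valued function `g : ℝⁿ → (−∞,∞]`. -/
def EConvexOn {n : ℕ} (g : EuclideanSpace ℝ (Fin n) → EReal) : Prop :=
  ∀ x y : EuclideanSpace ℝ (Fin n), ∀ t ∈ Set.Icc (0 : ℝ) 1,
    g (t • x + (1 - t) • y) ≤ (t : EReal) * g x + ((1 - t : ℝ) : EReal) * g y

/-- The forward-backward envelope
`φ_γ(x) = inf_y { f(x) + ⟪∇f(x), y − x⟫ + g(y) + ‖y − x‖²/(2γ) }`. -/
noncomputable def fbEnvelope {n : ℕ} (f : EuclideanSpace ℝ (Fin n) → ℝ)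
    (g : EuclideanSpace ℝ (Fin n) → EReal) (γ : ℝ) (x : EuclideanSpace ℝ (Fin n)) : EReal :=
  ⨅ y : EuclideanSpace ℝ (Fin n),
    (((f x + ⟪gradient f x, y - x⟫ + 1 / (2 * γ) * ‖y - x‖ ^ 2 : ℝ)) : EReal) + g y


open Filter Topology

noncomputable section

lemma lsc_exists_min {X : Type*} [MetricSpace X] {s : Set X} (hs : IsCompact s)
    (hne : s.Nonempty) {F : X → EReal} (hF : LowerSemicontinuous F) :
    ∃ p ∈ s, ∀ y ∈ s, F p ≤ F y := by
  obtain ⟨u, hmono, hlim, hmem⟩ := exists_seq_tendsto_sInf (hne.image F) (OrderBot.bddBelow _)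
  choose x hxs hxF using fun k => (hmem k : u k ∈ F '' s)
  obtain ⟨p, hps, φ, hφ, hxp⟩ := hs.tendsto_subseq hxs
  refine ⟨p, hps, fun y hy => ?_⟩
  have hm : sInf (F '' s) ≤ F y := sInf_le ⟨y, hy, rfl⟩
  refine le_trans ?_ hm
  by_contra hlt
  push_neg at hlt
  obtain ⟨z, hz1, hz2⟩ := exists_between hlt
  have h1 : ∀ᶠ k in atTop, z < F (x (φ k)) := hxp.eventually (hF p z hz2)
  have h2 : ∀ᶠ k in atTop, u (φ k) < z :=
    (hlim.comp hφ.tendsto_atTop).eventually_lt_const hz1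
  obtain ⟨k, hk1, hk2⟩ := (h1.and h2).exists
  rw [hxF (φ k)] at hk1
  exact absurd hk1 (not_lt.2 hk2.le)


def IsProx {n : ℕ} (g : EuclideanSpace ℝ (Fin n) → EReal) (γ : ℝ)
    (u p : EuclideanSpace ℝ (Fin n)) : Prop :=
  g p ≠ ⊤ ∧ ∀ y, ((1 / (2 * γ) * ‖p - u‖ ^ 2 : ℝ) : EReal) + g p
    ≤ ((1 / (2 * γ) * ‖y - u‖ ^ 2 : ℝ) : EReal) + g y

lemma nonneg_of_forall_slope (B C : ℝ) (hB : 0 ≤ B)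
    (key : ∀ t : ℝ, 0 < t → t ≤ 1 → 0 ≤ C + t * B) : 0 ≤ C := by
  rcases eq_or_lt_of_le hB with h | h
  · have := key 1 one_pos le_rfl; linarith [h]
  · by_contra hneg
    push_neg at hneg
    have h2 := key (min 1 (-C / (2 * B))) (lt_min one_pos (div_pos (by linarith) (by linarith))) (min_le_left _ _)
    have h3 : min 1 (-C / (2 * B)) * B ≤ (-C / (2 * B)) * B :=
      mul_le_mul_of_nonneg_right (min_le_right _ _) hB
    have h4 : (-C / (2 * B)) * B = -C / 2 := by field_simp
    linarith

lemma prox_subgrad {n : ℕ} {γ : ℝ} (hγ : 0 < γ)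
    {g : EuclideanSpace ℝ (Fin n) → EReal}
    (hgbot : ∀ x, g x ≠ ⊥) (hgconv : EConvexOn g)
    {u p : EuclideanSpace ℝ (Fin n)} (hp : IsProx g γ u p) :
    ∀ z, g z ≠ ⊤ → ⟪u - p, z - p⟫ ≤ γ * ((g z).toReal - (g p).toReal) := by
  obtain ⟨hptop, hmin⟩ := hp
  intro z hz
  obtain ⟨gp, hgp⟩ : ∃ r : ℝ, g p = (r : EReal) :=
    ⟨(g p).toReal, (EReal.coe_toReal hptop (hgbot p)).symm⟩
  obtain ⟨gz, hgz⟩ : ∃ r : ℝ, g z = (r : EReal) :=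
    ⟨(g z).toReal, (EReal.coe_toReal hz (hgbot z)).symm⟩
  rw [hgp, hgz, EReal.toReal_coe, EReal.toReal_coe]
  have hγ0 : γ ≠ 0 := ne_of_gt hγ
  have key : ∀ t : ℝ, 0 < t → t ≤ 1 →
      0 ≤ (⟪p - u, z - p⟫ / γ + gz - gp) + t * (1 / (2 * γ) * ‖z - p‖ ^ 2) := by
    intro t ht0 ht1
    have hconv := hgconv z p t ⟨ht0.le, ht1⟩
    have hmt := hmin (t • z + (1 - t) • p)
    have hle := le_trans hmt (add_le_add le_rfl hconv)
    rw [hgp, hgz, ← EReal.coe_mul, ← EReal.coe_mul, ← EReal.coe_add, ← EReal.coe_add,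
      ← EReal.coe_add, EReal.coe_le_coe_iff] at hle
    have hq : ‖t • z + (1 - t) • p - u‖ ^ 2
        = ‖p - u‖ ^ 2 + 2 * t * ⟪p - u, z - p⟫ + t ^ 2 * ‖z - p‖ ^ 2 := by
      have hv : t • z + (1 - t) • p - u = (p - u) + t • (z - p) := by module
      rw [hv, @norm_add_sq_real, inner_smul_right, norm_smul, Real.norm_eq_abs, mul_pow, sq_abs]
      ring
    rw [hq] at hle
    have heq : t * ((⟪p - u, z - p⟫ / γ + gz - gp) + t * (1 / (2 * γ) * ‖z - p‖ ^ 2))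
        = (1 / (2 * γ) * (‖p - u‖ ^ 2 + 2 * t * ⟪p - u, z - p⟫ + t ^ 2 * ‖z - p‖ ^ 2)
            + (t * gz + (1 - t) * gp)) - (1 / (2 * γ) * ‖p - u‖ ^ 2 + gp) := by
      field_simp
      ring
    have h0 : 0 ≤ t * ((⟪p - u, z - p⟫ / γ + gz - gp) + t * (1 / (2 * γ) * ‖z - p‖ ^ 2)) := by
      rw [heq]; linarith [hle]
    have h1 : t * 0 ≤ t * ((⟪p - u, z - p⟫ / γ + gz - gp) + t * (1 / (2 * γ) * ‖z - p‖ ^ 2)) := by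
      linarith [h0]
    exact le_of_mul_le_mul_left h1 ht0
  have hC := nonneg_of_forall_slope _ _ (by positivity) key
  have h6 : 0 * γ ≤ (⟪p - u, z - p⟫ / γ + gz - gp) * γ := mul_le_mul_of_nonneg_right hC hγ.le
  have h7 : (⟪p - u, z - p⟫ / γ + gz - gp) * γ = ⟪p - u, z - p⟫ + γ * (gz - gp) := by
    field_simp; ring
  have hin : ⟪u - p, z - p⟫ = -⟪p - u, z - p⟫ := by
    rw [show u - p = -(p - u) by abel, inner_neg_left]
  rw [hin]
  linarith

lemma prox_firm {n : ℕ} {γ : ℝ} (hγ : 0 < γ)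
    {g : EuclideanSpace ℝ (Fin n) → EReal}
    (hgbot : ∀ x, g x ≠ ⊥) (hgconv : EConvexOn g)
    {u u' p p' : EuclideanSpace ℝ (Fin n)}
    (hp : IsProx g γ u p) (hp' : IsProx g γ u' p') :
    ‖p - p'‖ ≤ ‖u - u'‖ := by
  have h1 := prox_subgrad hγ hgbot hgconv hp p' hp'.1
  have h2 := prox_subgrad hγ hgbot hgconv hp' p hp.1
  have e1 : ⟪u - p, p' - p⟫ = ⟪u - u', p' - p⟫ - ⟪p - p', p' - p⟫ + ⟪u' - p', p' - p⟫ := by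
    rw [← inner_sub_left, ← inner_add_left]
    congr 1
    abel
  have e2 : ⟪u' - p', p - p'⟫ = -⟪u' - p', p' - p⟫ := by
    rw [show p - p' = -(p' - p) by abel, inner_neg_right]
  have e3 : ⟪p - p', p' - p⟫ = -(‖p - p'‖ ^ 2) := by
    rw [show p' - p = -(p - p') by abel, inner_neg_right, real_inner_self_eq_norm_sq]
  rw [e1, e3] at h1
  rw [e2] at h2
  have hsum : ‖p - p'‖ ^ 2 ≤ ⟪u - u', p - p'⟫ := by
    have e4 : ⟪u - u', p - p'⟫ = -⟪u - u', p' - p⟫ := by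
      rw [show p - p' = -(p' - p) by abel, inner_neg_right]
    rw [e4]
    linarith
  have hcs : ⟪u - u', p - p'⟫ ≤ ‖u - u'‖ * ‖p - p'‖ := real_inner_le_norm _ _
  rcases eq_or_lt_of_le (norm_nonneg (p - p')) with h0 | h0
  · rw [← h0]; exact norm_nonneg _
  · nlinarith


lemma g_linear_lb {n : ℕ} [Nontrivial (EuclideanSpace ℝ (Fin n))]
    (g : EuclideanSpace ℝ (Fin n) → EReal)
    (hgbot : ∀ x, g x ≠ ⊥) (hglsc : LowerSemicontinuous g) (hgconv : EConvexOn g)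
    {y0 : EuclideanSpace ℝ (Fin n)} (hy0 : g y0 ≠ ⊤) :
    ∃ c1 c2 : ℝ, 0 ≤ c2 ∧ ∀ y, ((c1 - c2 * ‖y - y0‖ : ℝ) : EReal) ≤ g y := by
  obtain ⟨p0, hp0b, hp0⟩ := lsc_exists_min (isCompact_closedBall y0 1)
    ⟨y0, Metric.mem_closedBall_self zero_le_one⟩ hglsc
  obtain ⟨p1, hp1s, hp1⟩ := lsc_exists_min (isCompact_sphere y0 1)
    (NormedSpace.sphere_nonempty.2 zero_le_one) hglsc
  have hgy0 : g y0 = ((g y0).toReal : EReal) := (EReal.coe_toReal hy0 (hgbot y0)).symm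
  set gy0 : ℝ := (g y0).toReal with hgy0def
  -- r0 : real lower bound on the closed ball
  have hr0top : g p0 ≠ ⊤ := by
    intro h
    have := hp0 y0 (Metric.mem_closedBall_self zero_le_one)
    rw [h, top_le_iff] at this
    exact hy0 this
  set r0 : ℝ := (g p0).toReal with hr0def
  have hr0 : ∀ y ∈ Metric.closedBall y0 1, (r0 : EReal) ≤ g y := by
    intro y hy
    rw [hr0def, EReal.coe_toReal hr0top (hgbot p0)]
    exact hp0 y hy
  -- r1 : real lower bound on the sphere
  set r1e : EReal := min (g p1) (g y0) with hr1edef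
  have hr1top : r1e ≠ ⊤ := by
    simp only [hr1edef, Ne, min_eq_top, not_and_or]
    exact Or.inr hy0
  have hr1bot : r1e ≠ ⊥ := by
    simp only [hr1edef, Ne, min_eq_bot, not_or]
    exact ⟨hgbot p1, hgbot y0⟩
  set r1 : ℝ := r1e.toReal with hr1def
  have hr1 : ∀ w ∈ Metric.sphere y0 1, (r1 : EReal) ≤ g w := by
    intro w hw
    rw [hr1def, EReal.coe_toReal hr1top hr1bot]
    exact le_trans (min_le_left _ _) (hp1 w hw)
  refine ⟨min r0 gy0, max 0 (gy0 - r1), le_max_left _ _, fun z => ?_⟩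
  set c1 : ℝ := min r0 gy0
  set c2 : ℝ := max 0 (gy0 - r1)
  by_cases hz : ‖z - y0‖ ≤ 1
  · refine le_trans ?_ (hr0 z (by simpa [Metric.mem_closedBall, dist_eq_norm] using hz))
    rw [EReal.coe_le_coe_iff]
    have h1 : c1 ≤ r0 := min_le_left _ _
    have h2 : 0 ≤ c2 := le_max_left _ _
    nlinarith [norm_nonneg (z - y0)]
  · push_neg at hz
    by_cases hzt : g z = ⊤
    · rw [hzt]; exact le_top
    set R : ℝ := ‖z - y0‖ with hRdef
    have hR1 : 1 < R := hz
    have hR0 : 0 < R := lt_trans zero_lt_one hR1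
    set t : ℝ := 1 / R with htdef
    have ht0 : 0 < t := by positivity
    have ht1 : t ≤ 1 := by
      rw [htdef, div_le_one hR0]; exact hR1.le
    set w := t • z + (1 - t) • y0 with hwdef
    have hws : w ∈ Metric.sphere y0 1 := by
      have : w - y0 = t • (z - y0) := by
        rw [hwdef]; module
      simp only [Metric.mem_sphere, dist_eq_norm, this, norm_smul]
      rw [Real.norm_eq_abs, abs_of_pos ht0, htdef]
      field_simp
      exact hRdef.symm
    have hconv := hgconv z y0 t ⟨ht0.le, ht1⟩
    have hzr : g z = (((g z).toReal : ℝ) : EReal) := (EReal.coe_toReal hzt (hgbot z)).symm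
    set gz : ℝ := (g z).toReal with hgzdef
    have key : (r1 : EReal) ≤ ((t * gz + (1 - t) * gy0 : ℝ) : EReal) := by
      refine le_trans (hr1 w hws) (le_trans hconv ?_)
      rw [hzr, hgy0, ← EReal.coe_mul, ← EReal.coe_mul, ← EReal.coe_add]
    rw [EReal.coe_le_coe_iff] at key
    rw [hzr, EReal.coe_le_coe_iff]
    -- real arithmetic: r1 ≤ t gz + (1-t) gy0, t = 1/R, R > 1 ⇒ c1 - c2 R ≤ gz
    have h3 : c1 ≤ gy0 := min_le_right _ _
    have h4 : gy0 - r1 ≤ c2 := le_max_right _ _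
    have htR : t * R = 1 := by rw [htdef]; field_simp
    have e0 : (t * gz + (1 - t) * gy0) * R = gz + (R - 1) * gy0 := by
      rw [htdef]; field_simp
    have e1 : r1 * R ≤ gz + (R - 1) * gy0 := by
      rw [← e0]; exact mul_le_mul_of_nonneg_right key hR0.le
    have e2 : (gy0 - r1) * R ≤ c2 * R := mul_le_mul_of_nonneg_right h4 hR0.le
    nlinarith [e1, e2, h3]


lemma exists_prox {n : ℕ} {γ : ℝ} (hγ : 0 < γ)
    (g : EuclideanSpace ℝ (Fin n) → EReal)
    (hgbot : ∀ x, g x ≠ ⊥) (hglsc : LowerSemicontinuous g)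
    {y0 : EuclideanSpace ℝ (Fin n)} (hy0 : g y0 ≠ ⊤)
    (c1 c2 : ℝ) (hc2 : 0 ≤ c2)
    (hlb : ∀ y, ((c1 - c2 * ‖y - y0‖ : ℝ) : EReal) ≤ g y)
    (u : EuclideanSpace ℝ (Fin n)) :
    ∃ p, g p ≠ ⊤ ∧ ∀ y,
      ((1 / (2 * γ) * ‖p - u‖ ^ 2 : ℝ) : EReal) + g p
        ≤ ((1 / (2 * γ) * ‖y - u‖ ^ 2 : ℝ) : EReal) + g y := by
  set F : EuclideanSpace ℝ (Fin n) → EReal :=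
    fun y => ((1 / (2 * γ) * ‖y - u‖ ^ 2 : ℝ) : EReal) + g y with hFdef
  have hFlsc : LowerSemicontinuous F := by
    apply LowerSemicontinuous.add'
    · exact (continuous_coe_real_ereal.comp <| by continuity).lowerSemicontinuous
    · exact hglsc
    · intro x
      exact EReal.continuousAt_add (Or.inl (EReal.coe_ne_top _)) (Or.inl (EReal.coe_ne_bot _))
  set gy0 : ℝ := (g y0).toReal with hgy0def
  have hgy0 : g y0 = (gy0 : EReal) := (EReal.coe_toReal hy0 (hgbot y0)).symm
  set M : ℝ := 1 / (2 * γ) * ‖y0 - u‖ ^ 2 + gy0 with hMdef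
  have hFy0 : F y0 = (M : EReal) := by rw [hFdef]; simp only; rw [hgy0, ← EReal.coe_add]
  set D : ℝ := ‖u - y0‖ with hDdef
  set R : ℝ := max (‖y0 - u‖) (max (2 * γ * (c2 + 1)) (|M - c1 + c2 * D| + 1)) with hRdef
  -- outside the ball of radius R around u, F y > M
  have hout : ∀ y, R < ‖y - u‖ → (M : EReal) < F y := by
    intro y hy
    have hFy : ((c1 - c2 * ‖y - y0‖ + 1 / (2 * γ) * ‖y - u‖ ^ 2 : ℝ) : EReal) ≤ F y := by
      rw [hFdef]; simp only
      calc ((c1 - c2 * ‖y - y0‖ + 1 / (2 * γ) * ‖y - u‖ ^ 2 : ℝ) : EReal)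
          = ((1 / (2 * γ) * ‖y - u‖ ^ 2 : ℝ) : EReal) + ((c1 - c2 * ‖y - y0‖ : ℝ) : EReal) := by
            rw [← EReal.coe_add]; congr 1; ring
        _ ≤ _ := add_le_add le_rfl (hlb y)
    refine lt_of_lt_of_le ?_ hFy
    rw [EReal.coe_lt_coe_iff]
    -- real arithmetic
    set ρ : ℝ := ‖y - u‖ with hρdef
    have h1 : ‖y0 - u‖ ≤ R := le_max_left _ _
    have h2 : 2 * γ * (c2 + 1) ≤ R := le_trans (le_max_left _ _) (le_max_right _ _)
    have h3 : |M - c1 + c2 * D| + 1 ≤ R := le_trans (le_max_right _ _) (le_max_right _ _)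
    have h4 : ‖y - y0‖ ≤ ρ + D := by
      have := norm_add_le (y - u) (u - y0)
      simpa [hρdef, hDdef, sub_add_sub_cancel] using this
    have habs : M - c1 + c2 * D ≤ |M - c1 + c2 * D| := le_abs_self _
    have hρR : R < ρ := hy
    have hR0 : 0 < R := lt_of_lt_of_le (by positivity) h2
    have hρ0 : 0 < ρ := lt_trans hR0 hρR
    -- from ρ > R ≥ 2γ(c2+1) : ρ²/(2γ) ≥ ρ(c2+1)
    have h5 : ρ * (c2 + 1) ≤ 1 / (2 * γ) * ρ ^ 2 := by
      rw [div_mul_eq_mul_div, le_div_iff₀ (by positivity), one_mul]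
      calc ρ * (c2 + 1) * (2 * γ) = ρ * (2 * γ * (c2 + 1)) := by ring
        _ ≤ ρ * ρ := by
            apply mul_le_mul_of_nonneg_left (le_trans h2 hρR.le) hρ0.le
        _ = ρ ^ 2 := by ring
    have h6 : c2 * ‖y - y0‖ ≤ c2 * (ρ + D) := mul_le_mul_of_nonneg_left h4 hc2
    clear_value M D R ρ
    nlinarith [h5, h3, habs, hρR, h6]
  -- minimize over the closed ball
  have hy0mem : y0 ∈ Metric.closedBall u R := by
    rw [Metric.mem_closedBall, dist_eq_norm]; exact le_max_left _ _
  obtain ⟨p, hpball, hpmin⟩ := lsc_exists_min (isCompact_closedBall u R) ⟨y0, hy0mem⟩ hFlsc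
  have hpM : F p ≤ (M : EReal) := by rw [← hFy0]; exact hpmin y0 hy0mem
  have hptop : g p ≠ ⊤ := by
    intro h
    rw [hFdef] at hpM; simp only [h] at hpM
    rw [EReal.add_top_of_ne_bot (EReal.coe_ne_bot _)] at hpM
    exact absurd hpM (by simp)
  refine ⟨p, hptop, fun y => ?_⟩
  by_cases hyball : y ∈ Metric.closedBall u R
  · exact hpmin y hyball
  · rw [Metric.mem_closedBall, dist_eq_norm, not_le] at hyball
    exact le_trans hpM (hout y hyball).le


lemma hasGradientAt_of_quadratic_bound {F : Type*} [NormedAddCommGroup F]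
    [InnerProductSpace ℝ F] [CompleteSpace F] {f : F → ℝ} {v x : F} (C : ℝ)
    (h : ∀ x', |f x' - f x - ⟪v, x' - x⟫| ≤ C * ‖x' - x‖ ^ 2) :
    HasGradientAt f v x := by
  rw [hasGradientAt_iff_isLittleO, Asymptotics.isLittleO_iff]
  intro c hc
  set Cm : ℝ := max C 1 with hCm
  have hCm0 : 0 < Cm := lt_of_lt_of_le one_pos (le_max_right _ _)
  have hball : ∀ᶠ x' in 𝓝 x, dist x' x ≤ c / Cm :=
    Metric.eventually_nhds_iff.2 ⟨c / Cm, by positivity, fun {x'} h' => le_of_lt h'⟩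
  filter_upwards [hball] with x' hx'
  rw [dist_eq_norm] at hx'
  have h1 := h x'
  have h2 : C * ‖x' - x‖ ^ 2 ≤ Cm * (c / Cm) * ‖x' - x‖ := by
    have : C * ‖x' - x‖ ^ 2 ≤ Cm * ‖x' - x‖ ^ 2 := by
      apply mul_le_mul_of_nonneg_right (le_max_left _ _) (by positivity)
    calc C * ‖x' - x‖ ^ 2 ≤ Cm * ‖x' - x‖ ^ 2 := this
      _ = Cm * ‖x' - x‖ * ‖x' - x‖ := by ring
      _ ≤ Cm * (c / Cm) * ‖x' - x‖ := by
          apply mul_le_mul_of_nonneg_right _ (norm_nonneg _)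
          exact mul_le_mul_of_nonneg_left hx' hCm0.le
  have h3 : Cm * (c / Cm) = c := by field_simp
  rw [Real.norm_eq_abs]
  calc |f x' - f x - ⟪v, x' - x⟫| ≤ C * ‖x' - x‖ ^ 2 := h1
    _ ≤ Cm * (c / Cm) * ‖x' - x‖ := h2
    _ = c * ‖x' - x‖ := by rw [h3]



def envOf {n : ℕ} (g : EuclideanSpace ℝ (Fin n) → EReal) (γ : ℝ)
    (P : EuclideanSpace ℝ (Fin n) → EuclideanSpace ℝ (Fin n))
    (u : EuclideanSpace ℝ (Fin n)) : ℝ :=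
  1 / (2 * γ) * ‖P u - u‖ ^ 2 + (g (P u)).toReal

section env
variable {n : ℕ} {g : EuclideanSpace ℝ (Fin n) → EReal} {γ : ℝ}
  {P : EuclideanSpace ℝ (Fin n) → EuclideanSpace ℝ (Fin n)}
  (hγ : 0 < γ) (hgbot : ∀ x, g x ≠ ⊥) (hP : ∀ u, IsProx g γ u (P u))

include hγ hgbot hP

lemma env_le (u z : EuclideanSpace ℝ (Fin n)) (hz : g z ≠ ⊤) :
    envOf g γ P u ≤ 1 / (2 * γ) * ‖z - u‖ ^ 2 + (g z).toReal := by
  have h := (hP u).2 z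
  rw [← EReal.coe_toReal (hP u).1 (hgbot (P u)), ← EReal.coe_toReal hz (hgbot z),
    ← EReal.coe_add, ← EReal.coe_add, EReal.coe_le_coe_iff] at h
  exact h

lemma env_grad (u : EuclideanSpace ℝ (Fin n)) (hfirm : ∀ u', ‖P u - P u'‖ ≤ ‖u - u'‖) :
    HasGradientAt (envOf g γ P) (γ⁻¹ • (u - P u)) u := by
  apply hasGradientAt_of_quadratic_bound (5 / (2 * γ))
  intro u'
  have hsmul : ⟪γ⁻¹ • (u - P u), u' - u⟫ = γ⁻¹ * ⟪u - P u, u' - u⟫ := real_inner_smul_left _ _ _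
  have hflip : ⟪u - P u, u' - u⟫ = -⟪P u - u, u' - u⟫ := by
    rw [show u - P u = -(P u - u) by abel, inner_neg_left]
  have henvu : envOf g γ P u = 1 / (2 * γ) * ‖P u - u‖ ^ 2 + (g (P u)).toReal := rfl
  have henvu' : envOf g γ P u' = 1 / (2 * γ) * ‖P u' - u'‖ ^ 2 + (g (P u')).toReal := rfl
  -- upper bound
  have key1 : envOf g γ P u' - envOf g γ P u + γ⁻¹ * ⟪P u - u, u' - u⟫
      ≤ 1 / (2 * γ) * ‖u' - u‖ ^ 2 := by
    have h1 := env_le hγ hgbot hP u' (P u) (hP u).1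
    have hexp : ‖P u - u'‖ ^ 2
        = ‖P u - u‖ ^ 2 - 2 * ⟪P u - u, u' - u⟫ + ‖u' - u‖ ^ 2 := by
      have hv : P u - u' = (P u - u) - (u' - u) := by abel
      rw [hv, @norm_sub_sq_real]
    rw [hexp] at h1
    have hid : 1 / (2 * γ) * (‖P u - u‖ ^ 2 - 2 * ⟪P u - u, u' - u⟫ + ‖u' - u‖ ^ 2)
        = 1 / (2 * γ) * ‖P u - u‖ ^ 2 + 1 / (2 * γ) * ‖u' - u‖ ^ 2
          - γ⁻¹ * ⟪P u - u, u' - u⟫ := by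
      field_simp; ring
    rw [hid] at h1
    linarith [h1]
  -- lower bound
  have key2 : -(5 / (2 * γ) * ‖u' - u‖ ^ 2)
      ≤ envOf g γ P u' - envOf g γ P u + γ⁻¹ * ⟪P u - u, u' - u⟫ := by
    have h2 := env_le hγ hgbot hP u (P u') (hP u').1
    have hexp : ‖P u' - u‖ ^ 2
        = ‖P u' - u'‖ ^ 2 + 2 * ⟪P u' - u', u' - u⟫ + ‖u' - u‖ ^ 2 := by
      have hv : P u' - u = (P u' - u') + (u' - u) := by abel
      rw [hv, @norm_add_sq_real]
    rw [hexp] at h2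
    have hid : 1 / (2 * γ) * (‖P u' - u'‖ ^ 2 + 2 * ⟪P u' - u', u' - u⟫ + ‖u' - u‖ ^ 2)
        = 1 / (2 * γ) * ‖P u' - u'‖ ^ 2 + 1 / (2 * γ) * ‖u' - u‖ ^ 2
          + γ⁻¹ * ⟪P u' - u', u' - u⟫ := by
      field_simp; ring
    rw [hid] at h2
    -- h2 : envOf u ≤ envOf u' + 1/(2γ)‖h‖² + γ⁻¹⟪Pu'-u', h⟫
    have hcs : ⟪(P u' - u') - (P u - u), u' - u⟫ ≤ 2 * ‖u' - u‖ ^ 2 := by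
      calc ⟪(P u' - u') - (P u - u), u' - u⟫ ≤ ‖(P u' - u') - (P u - u)‖ * ‖u' - u‖ :=
            real_inner_le_norm _ _
        _ ≤ (‖P u' - P u‖ + ‖u' - u‖) * ‖u' - u‖ := by
            apply mul_le_mul_of_nonneg_right _ (norm_nonneg _)
            have : (P u' - u') - (P u - u) = (P u' - P u) - (u' - u) := by abel
            rw [this]
            exact norm_sub_le _ _
        _ ≤ (‖u' - u‖ + ‖u' - u‖) * ‖u' - u‖ := by
            apply mul_le_mul_of_nonneg_right _ (norm_nonneg _)
            have h3 : ‖P u' - P u‖ = ‖P u - P u'‖ := norm_sub_rev _ _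
            have h4 : ‖u - u'‖ = ‖u' - u‖ := norm_sub_rev _ _
            rw [h3]
            have h5 : ‖P u - P u'‖ ≤ ‖u' - u‖ := h4 ▸ hfirm u'
            linarith
        _ = 2 * ‖u' - u‖ ^ 2 := by ring
    have hsplit : ⟪P u' - u', u' - u⟫ - ⟪P u - u, u' - u⟫
        = ⟪(P u' - u') - (P u - u), u' - u⟫ := (inner_sub_left _ _ _).symm
    have hγinv : 0 < γ⁻¹ := by positivity
    have hmul : γ⁻¹ * (⟪P u' - u', u' - u⟫ - ⟪P u - u, u' - u⟫) ≤ γ⁻¹ * (2 * ‖u' - u‖ ^ 2) := by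
      apply mul_le_mul_of_nonneg_left _ hγinv.le
      rw [hsplit]; exact hcs
    have hconst : γ⁻¹ * (2 * ‖u' - u‖ ^ 2) + 1 / (2 * γ) * ‖u' - u‖ ^ 2
        = 5 / (2 * γ) * ‖u' - u‖ ^ 2 := by
      field_simp; ring
    nlinarith [h2, hmul]
  rw [hsmul, hflip]
  rw [abs_le]
  constructor
  · linarith [key2]
  · have h5 : 1 / (2 * γ) * ‖u' - u‖ ^ 2 ≤ 5 / (2 * γ) * ‖u' - u‖ ^ 2 := by
      apply mul_le_mul_of_nonneg_right _ (by positivity)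
      gcongr <;> norm_num
    linarith [key1]

end env


section spectral
variable {n : ℕ} (A : EuclideanSpace ℝ (Fin n) →L[ℝ] EuclideanSpace ℝ (Fin n))

/-- All the spectral facts we need, packaged. -/
lemma spectral_facts (hsym : ∀ x y, ⟪A x, y⟫ = ⟪x, A y⟫) {lmin lmax γ : ℝ}
    (hlmin : IsLeast {r : ℝ | ∃ v ≠ 0, A v = r • v} lmin)
    (hlmax : IsGreatest {r : ℝ | ∃ v ≠ 0, A v = r • v} lmax)
    (hγ0 : 0 < γ) (hγmax : γ * lmax ≤ 1) (hlmin0 : 0 ≤ lmin) :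
    (∀ v, ‖v - γ • A v‖ ≤ (1 - γ * lmin) * ‖v‖) ∧
    (∀ v, min ((1 - γ * lmin) * lmin) ((1 - γ * lmax) * lmax) * ‖v‖ ^ 2
        ≤ ⟪A v, v⟫ - γ * ‖A v‖ ^ 2) := by
  have hTsym : (A : EuclideanSpace ℝ (Fin n) →ₗ[ℝ] EuclideanSpace ℝ (Fin n)).IsSymmetric :=
    fun x y => hsym x y
  have hrank : Module.finrank ℝ (EuclideanSpace ℝ (Fin n)) = n := finrank_euclideanSpace_fin
  set b := hTsym.eigenvectorBasis hrank with hb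
  set μ := hTsym.eigenvalues hrank with hμ
  have hAv : ∀ (v : EuclideanSpace ℝ (Fin n)) (i : Fin n),
      b.repr (A v) i = μ i * b.repr v i := fun v i =>
    hTsym.eigenvectorBasis_apply_self_apply hrank v i
  have hμmem : ∀ i, μ i ∈ {r : ℝ | ∃ v ≠ 0, A v = r • v} := by
    intro i
    refine ⟨b i, ?_, ?_⟩
    · exact b.toBasis.ne_zero i
    · exact hTsym.apply_eigenvectorBasis hrank i
  have hμlb : ∀ i, lmin ≤ μ i := fun i => hlmin.2 (hμmem i)
  have hμub : ∀ i, μ i ≤ lmax := fun i => hlmax.2 (hμmem i)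
  -- inner products via sums
  have hinner : ∀ v w : EuclideanSpace ℝ (Fin n), ⟪v, w⟫ = ∑ i, b.repr v i * b.repr w i := by
    intro v w
    calc ⟪v, w⟫ = ⟪b.repr v, b.repr w⟫ := (b.repr.inner_map_map v w).symm
      _ = ∑ i, b.repr v i * b.repr w i := by
          simp only [PiLp.inner_apply, RCLike.inner_apply, conj_trivial]
          exact Finset.sum_congr rfl fun i _ => mul_comm _ _
  have hnorm : ∀ v : EuclideanSpace ℝ (Fin n), ‖v‖ ^ 2 = ∑ i, (b.repr v i) ^ 2 := by
    intro v
    rw [← real_inner_self_eq_norm_sq, hinner]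
    congr 1; ext i; ring
  constructor
  · -- operator bound for I - γA
    intro v
    have h1 : ‖v - γ • A v‖ ^ 2 ≤ ((1 - γ * lmin) * ‖v‖) ^ 2 := by
      have e1 : ‖v - γ • A v‖ ^ 2 = ∑ i, ((1 - γ * μ i) * b.repr v i) ^ 2 := by
        rw [hnorm]
        congr 1; ext i
        rw [map_sub, map_smul]
        simp only [PiLp.sub_apply, PiLp.smul_apply, smul_eq_mul, hAv]
        ring
      have e2 : ((1 - γ * lmin) * ‖v‖) ^ 2 = ∑ i, ((1 - γ * lmin) * b.repr v i) ^ 2 := by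
        rw [mul_pow, hnorm, Finset.mul_sum]
        congr 1; ext i; ring
      rw [e1, e2]
      apply Finset.sum_le_sum
      intro i _
      have h2 : 0 ≤ 1 - γ * lmax := by linarith
      have h3 := hμlb i
      have h4 := hμub i
      have h5 : 0 ≤ 1 - γ * μ i := by nlinarith
      have h6 : 1 - γ * μ i ≤ 1 - γ * lmin := by nlinarith
      have h7 : (1 - γ * μ i) ^ 2 ≤ (1 - γ * lmin) ^ 2 := pow_le_pow_left₀ h5 h6 2
      calc ((1 - γ * μ i) * b.repr v i) ^ 2 = (1 - γ * μ i) ^ 2 * (b.repr v i) ^ 2 := by ring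
        _ ≤ (1 - γ * lmin) ^ 2 * (b.repr v i) ^ 2 :=
            mul_le_mul_of_nonneg_right h7 (sq_nonneg _)
        _ = ((1 - γ * lmin) * b.repr v i) ^ 2 := by ring
    have hminmax : lmin ≤ lmax := hlmin.2 hlmax.1
    have h2 : 0 ≤ (1 - γ * lmin) * ‖v‖ := by
      apply mul_nonneg _ (norm_nonneg _)
      nlinarith [mul_le_mul_of_nonneg_left hminmax hγ0.le]
    nlinarith [norm_nonneg (v - γ • A v), h1, h2]
  · -- quadratic form lower bound
    intro v
    have e1 : ⟪A v, v⟫ = ∑ i, μ i * (b.repr v i) ^ 2 := by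
      rw [hinner]
      congr 1; ext i
      rw [hAv]; ring
    have e2 : ‖A v‖ ^ 2 = ∑ i, (μ i)^2 * (b.repr v i) ^ 2 := by
      rw [hnorm]
      congr 1; ext i
      rw [hAv]; ring
    have e3 : min ((1 - γ * lmin) * lmin) ((1 - γ * lmax) * lmax) * ‖v‖ ^ 2
        = ∑ i, min ((1 - γ * lmin) * lmin) ((1 - γ * lmax) * lmax) * (b.repr v i) ^ 2 := by
      rw [hnorm, Finset.mul_sum]
    rw [e1, e2, e3, Finset.mul_sum, ← Finset.sum_sub_distrib]
    apply Finset.sum_le_sum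
    intro i _
    have h3 := hμlb i
    have h4 := hμub i
    have hK1 : min ((1 - γ * lmin) * lmin) ((1 - γ * lmax) * lmax) ≤ (1 - γ * lmin) * lmin :=
      min_le_left _ _
    have hK2 : min ((1 - γ * lmin) * lmin) ((1 - γ * lmax) * lmax) ≤ (1 - γ * lmax) * lmax :=
      min_le_right _ _
    have hs : 0 ≤ (b.repr v i) ^ 2 := sq_nonneg _
    -- scalar : K ≤ μ(1 - γμ) for μ ∈ [lmin, lmax]
    have hscal : min ((1 - γ * lmin) * lmin) ((1 - γ * lmax) * lmax) ≤ μ i - γ * (μ i) ^ 2 := by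
      rcases eq_or_lt_of_le h3 with h | h
      · have hm : μ i = lmin := h.symm
        rw [hm]
        nlinarith [hK1]
      · rcases eq_or_lt_of_le h4 with h' | h'
        · have hm : μ i = lmax := h'
          rw [hm]
          nlinarith [hK2]
        · have hll : 0 < lmax - lmin := by linarith
          have s1 : (lmax - μ i) * min ((1 - γ * lmin) * lmin) ((1 - γ * lmax) * lmax)
              ≤ (lmax - μ i) * ((1 - γ * lmin) * lmin) :=
            mul_le_mul_of_nonneg_left hK1 (by linarith)
          have s2 : (μ i - lmin) * min ((1 - γ * lmin) * lmin) ((1 - γ * lmax) * lmax)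
              ≤ (μ i - lmin) * ((1 - γ * lmax) * lmax) :=
            mul_le_mul_of_nonneg_left hK2 (by linarith)
          have s3 : 0 < γ * ((μ i - lmin) * ((lmax - μ i) * (lmax - lmin))) :=
            mul_pos hγ0 (mul_pos (by linarith) (mul_pos (by linarith) hll))
          nlinarith [s1, s2, s3, hll]
    calc min ((1 - γ * lmin) * lmin) ((1 - γ * lmax) * lmax) * (b.repr v i) ^ 2
        ≤ (μ i - γ * (μ i) ^ 2) * (b.repr v i) ^ 2 := mul_le_mul_of_nonneg_right hscal hs
      _ = μ i * (b.repr v i) ^ 2 - γ * ((μ i)^2 * (b.repr v i) ^ 2) := by ring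
end spectral



section quad
variable {n : ℕ} (C : EuclideanSpace ℝ (Fin n) →L[ℝ] EuclideanSpace ℝ (Fin n))
  (c : EuclideanSpace ℝ (Fin n)) (β : ℝ)

lemma quad_gradient (hsymC : ∀ x y, ⟪C x, y⟫ = ⟪x, C y⟫) (x : EuclideanSpace ℝ (Fin n)) :
    HasGradientAt (fun z => 1 / 2 * ⟪C z, z⟫ + ⟪c, z⟫ + β) (C x + c) x := by
  apply hasGradientAt_of_quadratic_bound (‖C‖ / 2)
  intro x'
  have key : (1 / 2 * ⟪C x', x'⟫ + ⟪c, x'⟫ + β) - (1 / 2 * ⟪C x, x⟫ + ⟪c, x⟫ + β)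
      - ⟪C x + c, x' - x⟫ = 1 / 2 * ⟪C (x' - x), x' - x⟫ := by
    have hx' : C x' = C x + C (x' - x) := by rw [← map_add]; congr 1; abel
    have hw : ∀ w : EuclideanSpace ℝ (Fin n), ⟪w, x'⟫ = ⟪w, x⟫ + ⟪w, x' - x⟫ := fun w => by
      rw [← inner_add_right]; congr 1; abel
    have e2 : ⟪C (x' - x), x⟫ = ⟪C x, x' - x⟫ := by
      rw [hsymC, real_inner_comm]
    rw [hx', inner_add_left, hw (C x), hw (C (x' - x)), hw c, e2, inner_add_left]
    ring
  rw [key]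
  rw [abs_le]
  have hb : |⟪C (x' - x), x' - x⟫| ≤ ‖C‖ * ‖x' - x‖ ^ 2 := by
    calc |⟪C (x' - x), x' - x⟫| ≤ ‖C (x' - x)‖ * ‖x' - x‖ := abs_real_inner_le_norm _ _
      _ ≤ ‖C‖ * ‖x' - x‖ * ‖x' - x‖ :=
          mul_le_mul_of_nonneg_right (C.le_opNorm _) (norm_nonneg _)
      _ = ‖C‖ * ‖x' - x‖ ^ 2 := by ring
  rw [abs_le] at hb
  constructor <;> [linarith [hb.1]; linarith [hb.2]]

lemma quad_convex (hsymC : ∀ x y, ⟪C x, y⟫ = ⟪x, C y⟫) (hpsdC : ∀ v, 0 ≤ ⟪C v, v⟫) :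
    ConvexOn ℝ Set.univ (fun z => 1 / 2 * ⟪C z, z⟫ + ⟪c, z⟫ + β) := by
  refine ⟨convex_univ, fun x _ y _ a b ha hb hab => ?_⟩
  simp only [smul_eq_mul]
  have e1 : ⟪C (a • x + b • y), a • x + b • y⟫
      = a ^ 2 * ⟪C x, x⟫ + 2 * (a * b) * ⟪C x, y⟫ + b ^ 2 * ⟪C y, y⟫ := by
    have e2 : ⟪C y, x⟫ = ⟪C x, y⟫ := by rw [hsymC, real_inner_comm]
    rw [map_add, map_smul, map_smul]
    simp only [inner_add_left, inner_add_right, real_inner_smul_left, real_inner_smul_right]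
    rw [e2]
    ring
  have e3 : ⟪C (x - y), x - y⟫ = ⟪C x, x⟫ - 2 * ⟪C x, y⟫ + ⟪C y, y⟫ := by
    rw [map_sub, inner_sub_left, inner_sub_right, inner_sub_right]
    have e2 : ⟪C y, x⟫ = ⟪C x, y⟫ := by rw [hsymC, real_inner_comm]
    rw [e2]
    ring
  have e4 : ⟪c, a • x + b • y⟫ = a * ⟪c, x⟫ + b * ⟪c, y⟫ := by
    rw [inner_add_right, inner_smul_right, inner_smul_right]
  have h5 := hpsdC (x - y)
  rw [e3] at h5
  have hab2 : b = 1 - a := by linarith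
  subst hab2
  rw [e1, e4]
  nlinarith [mul_nonneg (mul_nonneg ha hb) h5]
end quad





lemma sqnorm_convex {n : ℕ} (u w : EuclideanSpace ℝ (Fin n)) {a : ℝ} (ha : 0 ≤ a)
    (h1a : 0 ≤ 1 - a) : ‖a • u + (1 - a) • w‖ ^ 2 ≤ a * ‖u‖ ^ 2 + (1 - a) * ‖w‖ ^ 2 := by
  rw [@norm_add_sq_real, norm_smul, norm_smul, real_inner_smul_left, real_inner_smul_right,
    Real.norm_eq_abs, Real.norm_eq_abs, mul_pow, mul_pow, sq_abs, sq_abs]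
  have h6 : ‖u - w‖ ^ 2 = ‖u‖ ^ 2 - 2 * ⟪u, w⟫ + ‖w‖ ^ 2 := norm_sub_sq_real u w
  have h5 : (0:ℝ) ≤ ‖u‖ ^ 2 - 2 * ⟪u, w⟫ + ‖w‖ ^ 2 := h6 ▸ sq_nonneg ‖u - w‖
  nlinarith [mul_nonneg (mul_nonneg ha h1a) h5]

lemma env_convex {n : ℕ} {g : EuclideanSpace ℝ (Fin n) → EReal} {γ : ℝ}
    {P : EuclideanSpace ℝ (Fin n) → EuclideanSpace ℝ (Fin n)}
    (hγ : 0 < γ) (hgbot : ∀ x, g x ≠ ⊥) (hgconv : EConvexOn g)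
    (hP : ∀ u, IsProx g γ u (P u)) :
    ConvexOn ℝ Set.univ (envOf g γ P) := by
  refine ⟨convex_univ, fun x _ y _ a b ha hb hab => ?_⟩
  have hab2 : b = 1 - a := by linarith
  subst hab2
  simp only [smul_eq_mul]
  have hconv := hgconv (P x) (P y) a ⟨ha, by linarith⟩
  obtain ⟨gx, hgx⟩ : ∃ r : ℝ, g (P x) = (r : EReal) :=
    ⟨(g (P x)).toReal, (EReal.coe_toReal (hP x).1 (hgbot (P x))).symm⟩
  obtain ⟨gy, hgy⟩ : ∃ r : ℝ, g (P y) = (r : EReal) :=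
    ⟨(g (P y)).toReal, (EReal.coe_toReal (hP y).1 (hgbot (P y))).symm⟩
  rw [hgx, hgy, ← EReal.coe_mul, ← EReal.coe_mul, ← EReal.coe_add] at hconv
  set zt := a • P x + (1 - a) • P y with hzt
  have hztop : g zt ≠ ⊤ := by
    intro h
    rw [h] at hconv
    exact absurd hconv (not_le.2 (EReal.coe_lt_top _))
  have hztr : (g zt).toReal ≤ a * gx + (1 - a) * gy := by
    rw [← EReal.coe_le_coe_iff, EReal.coe_toReal hztop (hgbot zt)]
    exact hconv
  have h1 := env_le hγ hgbot hP (a • x + (1 - a) • y) zt hztop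
  have hv : zt - (a • x + (1 - a) • y) = a • (P x - x) + (1 - a) • (P y - y) := by
    rw [hzt]; module
  have hq : ‖zt - (a • x + (1 - a) • y)‖ ^ 2
      ≤ a * ‖P x - x‖ ^ 2 + (1 - a) * ‖P y - y‖ ^ 2 := by
    rw [hv]; exact sqnorm_convex _ _ ha (by linarith)
  have hs : (0:ℝ) ≤ 1 / (2 * γ) := by positivity
  have hq2 : 1 / (2 * γ) * ‖zt - (a • x + (1 - a) • y)‖ ^ 2
      ≤ 1 / (2 * γ) * (a * ‖P x - x‖ ^ 2 + (1 - a) * ‖P y - y‖ ^ 2) :=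
    mul_le_mul_of_nonneg_left hq hs
  have hex : envOf g γ P x = 1 / (2 * γ) * ‖P x - x‖ ^ 2 + gx := by
    rw [envOf, hgx, EReal.toReal_coe]
  have hey : envOf g γ P y = 1 / (2 * γ) * ‖P y - y‖ ^ 2 + gy := by
    rw [envOf, hgy, EReal.toReal_coe]
  rw [hex, hey]
  nlinarith [h1, hq2, hztr]

end

set_option maxHeartbeats 1000000 in
/-- basic properties of the FBE for a convex quadratic `f`.
Let `f(x) = ⟪Ax,x⟫/2 + ⟪b,x⟫ + α` with `A` symmetric positive-semidefinite, let `g` be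
proper, lsc, convex, let `ℓ > 0` be a Lipschitz constant of `x ↦ Ax + b`, and let
`γ ∈ (0, 1/ℓ)`. With `λ_min(A) = lmin`, `λ_max(A) = lmax`,
`L = 2(1 − γ·lmin)/γ` and `K = min{(1 − γ·lmin)·lmin, (1 − γ·lmax)·lmax}`, the FBE
`φ_γ` is real-valued and convex, differentiable, with `∇φ_γ` Lipschitz with constant
`L`; and if `A` is positive-definite then `φ_γ` is strongly convex with modulus `K`
(i.e. `φ_γ − (K/2)‖·‖²` is convex). -/
theorem stmt10 {n : ℕ}
    (A : EuclideanSpace ℝ (Fin n) →L[ℝ] EuclideanSpace ℝ (Fin n))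
    (hsym : ∀ x y, ⟪A x, y⟫ = ⟪x, A y⟫)
    (hpsd : ∀ x, 0 ≤ ⟪A x, x⟫)
    (b : EuclideanSpace ℝ (Fin n)) (α : ℝ)
    (g : EuclideanSpace ℝ (Fin n) → EReal)
    (hgbot : ∀ x, g x ≠ ⊥) (hgtop : ∃ x, g x ≠ ⊤)
    (hglsc : LowerSemicontinuous g) (hgconv : EConvexOn g)
    (ℓ : ℝ) (hℓ : 0 < ℓ)
    (hLip : ∀ x y, ‖(A x + b) - (A y + b)‖ ≤ ℓ * ‖x - y‖)
    (γ : ℝ) (hγ : γ ∈ Set.Ioo (0 : ℝ) (1 / ℓ))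
    (lmin lmax : ℝ)
    (hlmin : IsLeast {r : ℝ | ∃ v ≠ 0, A v = r • v} lmin)
    (hlmax : IsGreatest {r : ℝ | ∃ v ≠ 0, A v = r • v} lmax) :

    ∃ ψ : EuclideanSpace ℝ (Fin n) → ℝ,
      (∀ x, fbEnvelope (fun z => 1 / 2 * ⟪A z, z⟫ + ⟪b, z⟫ + α) g γ x = (ψ x : EReal)) ∧
      ConvexOn ℝ Set.univ ψ ∧
      Differentiable ℝ ψ ∧
      (∀ x y, ‖gradient ψ x - gradient ψ y‖ ≤ (2 * (1 - γ * lmin) / γ) * ‖x - y‖) ∧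
      ((∀ x, x ≠ 0 → 0 < ⟪A x, x⟫) →
        ConvexOn ℝ Set.univ (fun x =>
          ψ x - min ((1 - γ * lmin) * lmin) ((1 - γ * lmax) * lmax) / 2 * ‖x‖ ^ 2)) := by
  classical
  obtain ⟨v0, hv00, hv0eq⟩ := hlmin.1
  haveI hnt : Nontrivial (EuclideanSpace ℝ (Fin n)) := ⟨v0, 0, hv00⟩
  have hγ0 : 0 < γ := hγ.1
  have hγℓ : γ * ℓ < 1 := by
    have := hγ.2
    rw [lt_div_iff₀ hℓ] at this
    linarith
  have hA : ∀ v, ‖A v‖ ≤ ℓ * ‖v‖ := by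
    intro v
    have := hLip v 0
    simpa using this
  have hlmin0 : 0 ≤ lmin := by
    have h := hpsd v0
    rw [hv0eq, real_inner_smul_left, real_inner_self_eq_norm_sq] at h
    have hv2 : 0 < ‖v0‖ ^ 2 := pow_pos (norm_pos_iff.2 hv00) 2
    nlinarith
  have hlmaxℓ : lmax ≤ ℓ := by
    obtain ⟨w, hw0, hweq⟩ := hlmax.1
    have h := hA w
    rw [hweq, norm_smul, Real.norm_eq_abs] at h
    have hw2 : 0 < ‖w‖ := norm_pos_iff.2 hw0
    have : |lmax| ≤ ℓ := le_of_mul_le_mul_right h hw2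
    exact le_trans (le_abs_self _) this
  have hγmax : γ * lmax ≤ 1 := by nlinarith
  have hminmax : lmin ≤ lmax := hlmin.2 hlmax.1
  have hγlmin1 : γ * lmin ≤ 1 := by nlinarith
  obtain ⟨hBopF, hQuadF⟩ := spectral_facts A hsym hlmin hlmax hγ0 hγmax hlmin0
  -- the proximal map
  obtain ⟨y0, hy0⟩ := hgtop
  obtain ⟨c1, c2, hc2, hlb⟩ := g_linear_lb g hgbot hglsc hgconv hy0
  set P : EuclideanSpace ℝ (Fin n) → EuclideanSpace ℝ (Fin n) :=
    fun u => Classical.choose (exists_prox hγ0 g hgbot hglsc hy0 c1 c2 hc2 hlb u) with hPdef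
  have hP : ∀ u, IsProx g γ u (P u) := fun u =>
    Classical.choose_spec (exists_prox hγ0 g hgbot hglsc hy0 c1 c2 hc2 hlb u)
  have hfirm : ∀ u u', ‖P u - P u'‖ ≤ ‖u - u'‖ := fun u u' =>
    prox_firm hγ0 hgbot hgconv (hP u) (hP u')
  set q : EuclideanSpace ℝ (Fin n) → EuclideanSpace ℝ (Fin n) :=
    fun x => x - γ • (A x + b) with hqdef
  have henvgrad : ∀ u, HasGradientAt (envOf g γ P) (γ⁻¹ • (u - P u)) u := fun u =>
    env_grad hγ0 hgbot hP u (fun u' => hfirm u u')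
  -- operators
  set Bop : EuclideanSpace ℝ (Fin n) →L[ℝ] EuclideanSpace ℝ (Fin n) :=
    ContinuousLinearMap.id ℝ _ - γ • A with hBdef
  have hBapp : ∀ v, Bop v = v - γ • A v := by
    intro v
    simp [hBdef]
  have hBsym : ∀ v w, ⟪Bop v, w⟫ = ⟪v, Bop w⟫ := by
    intro v w
    rw [hBapp, hBapp, inner_sub_left, inner_sub_right, real_inner_smul_left,
      real_inner_smul_right, hsym]
  have hBnorm : ∀ v, ‖Bop v‖ ≤ (1 - γ * lmin) * ‖v‖ := by
    intro v
    rw [hBapp]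
    exact hBopF v
  set Cq : EuclideanSpace ℝ (Fin n) →L[ℝ] EuclideanSpace ℝ (Fin n) :=
    A - γ • (A.comp A) with hCdef
  have hCapp : ∀ v, Cq v = A v - γ • A (A v) := by
    intro v
    simp [hCdef]
  have hCsym : ∀ x y, ⟪Cq x, y⟫ = ⟪x, Cq y⟫ := by
    intro x y
    rw [hCapp, hCapp, inner_sub_left, inner_sub_right, real_inner_smul_left,
      real_inner_smul_right, hsym, hsym, hsym]
  have hCquad : ∀ v, ⟪Cq v, v⟫ = ⟪A v, v⟫ - γ * ‖A v‖ ^ 2 := by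
    intro v
    rw [hCapp, inner_sub_left, real_inner_smul_left, hsym (A v) v, real_inner_self_eq_norm_sq]
  set cq : EuclideanSpace ℝ (Fin n) := b - γ • A b with hcqdef
  set βq : ℝ := α - γ / 2 * ‖b‖ ^ 2 with hβqdef
  set K : ℝ := min ((1 - γ * lmin) * lmin) ((1 - γ * lmax) * lmax) with hKdef
  have hK0 : 0 ≤ K := by
    apply le_min
    · apply mul_nonneg _ hlmin0
      linarith
    · apply mul_nonneg _ (le_trans hlmin0 hminmax)
      linarith
  have hKquad : ∀ v, K * ‖v‖ ^ 2 ≤ ⟪Cq v, v⟫ := by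
    intro v
    rw [hCquad]
    exact hQuadF v
  have hCpsd : ∀ v, 0 ≤ ⟪Cq v, v⟫ := by
    intro v
    refine le_trans ?_ (hKquad v)
    positivity
  set ψ : EuclideanSpace ℝ (Fin n) → ℝ :=
    fun x => (1 / 2 * ⟪Cq x, x⟫ + ⟪cq, x⟫ + βq) + envOf g γ P (q x) with hψdef
  -- affine forward map and chain rule
  have hqaff : ∀ x, q x = Bop x - γ • b := by
    intro x
    rw [hBapp]
    simp only [hqdef]
    rw [smul_add]
    abel
  have hqfd : ∀ x, HasFDerivAt q Bop x := by
    intro x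
    have h1 : HasFDerivAt (fun z => Bop z - γ • b) Bop x := Bop.hasFDerivAt.sub_const _
    have h2 : (fun z => Bop z - γ • b) = q := funext fun z => (hqaff z).symm
    rwa [h2] at h1
  have hgradsum : ∀ x, HasGradientAt ψ (Cq x + cq + Bop (γ⁻¹ • (q x - P (q x)))) x := by
    intro x
    have h1 := quad_gradient Cq cq βq hCsym x
    have h2 := henvgrad (q x)
    have h3 : HasFDerivAt (fun z => envOf g γ P (q z))
        ((InnerProductSpace.toDual ℝ _ (γ⁻¹ • (q x - P (q x)))).comp Bop) x :=
      HasFDerivAt.comp x h2.hasFDerivAt (hqfd x)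
    have h4 : (InnerProductSpace.toDual ℝ _ (γ⁻¹ • (q x - P (q x)))).comp Bop
        = InnerProductSpace.toDual ℝ _ (Bop (γ⁻¹ • (q x - P (q x)))) := by
      apply ContinuousLinearMap.ext
      intro h
      simp only [ContinuousLinearMap.comp_apply, InnerProductSpace.toDual_apply_apply]
      exact (hBsym _ _).symm
    rw [h4] at h3
    have h6 : HasFDerivAt ψ
        (InnerProductSpace.toDual ℝ _ (Cq x + cq)
          + InnerProductSpace.toDual ℝ _ (Bop (γ⁻¹ • (q x - P (q x))))) x :=
      h1.hasFDerivAt.add h3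
    rw [← map_add] at h6
    exact hasGradientAt_iff_hasFDerivAt.mpr h6
  have hvec : ∀ x, Cq x + cq + Bop (γ⁻¹ • (q x - P (q x))) = γ⁻¹ • Bop (x - P (q x)) := by
    intro x
    have hCb : Cq x + cq = Bop (A x + b) := by
      rw [hCapp, hcqdef, hBapp, map_add]
      module
    have hx : x - P (q x) = (q x - P (q x)) + γ • (A x + b) := by
      simp only [hqdef]
      abel
    have hsplit : γ⁻¹ • Bop ((q x - P (q x)) + γ • (A x + b))
        = γ⁻¹ • Bop (q x - P (q x)) + Bop (A x + b) := by
      rw [map_add, map_smul, smul_add, smul_smul, inv_mul_cancel₀ hγ0.ne', one_smul]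
    rw [hCb, hx, hsplit, map_smul]
    abel
  have hψgrad : ∀ x, HasGradientAt ψ (γ⁻¹ • Bop (x - P (q x))) x := by
    intro x
    rw [← hvec x]
    exact hgradsum x
  have henvq : ConvexOn ℝ Set.univ (fun x => envOf g γ P (q x)) := by
    have hec := env_convex hγ0 hgbot hgconv hP
    refine ⟨convex_univ, fun x _ y _ a b' ha hb hab => ?_⟩
    have hb2 : b' = 1 - a := by linarith
    subst hb2
    have hqa : q (a • x + (1 - a) • y) = a • q x + (1 - a) • q y := by
      simp only [hqdef]
      have hAa : A (a • x + (1 - a) • y) = a • A x + (1 - a) • A y := by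
        rw [map_add, map_smul, map_smul]
      rw [hAa]
      module
    simp only
    rw [hqa]
    exact hec.2 (Set.mem_univ (q x)) (Set.mem_univ (q y)) ha hb hab
  refine ⟨ψ, ?_, ?_, ?_, ?_, ?_⟩
  · -- fbEnvelope equality
    intro x
    have hgradf : gradient (fun z => 1 / 2 * ⟪A z, z⟫ + ⟪b, z⟫ + α) x = A x + b :=
      (quad_gradient A b α hsym x).gradient
    obtain ⟨gpx, hgpx⟩ : ∃ r : ℝ, g (P (q x)) = (r : EReal) :=
      ⟨(g (P (q x))).toReal, (EReal.coe_toReal (hP (q x)).1 (hgbot _)).symm⟩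
    have henvval : envOf g γ P (q x) = 1 / (2 * γ) * ‖P (q x) - q x‖ ^ 2 + gpx := by
      rw [envOf, hgpx, EReal.toReal_coe]
    have hquadid : 1 / 2 * ⟪Cq x, x⟫ + ⟪cq, x⟫ + βq
        = (1 / 2 * ⟪A x, x⟫ + ⟪b, x⟫ + α) - γ / 2 * ‖A x + b‖ ^ 2 := by
      have hn : ‖A x + b‖ ^ 2 = ‖A x‖ ^ 2 + 2 * ⟪A x, b⟫ + ‖b‖ ^ 2 := norm_add_sq_real _ _
      have hab : ⟪A b, x⟫ = ⟪A x, b⟫ := by rw [hsym, real_inner_comm]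
      rw [hn, hCquad x, hcqdef, inner_sub_left, real_inner_smul_left, hab, hβqdef]
      ring
    have hsq : ∀ y, (1 / 2 * ⟪A x, x⟫ + ⟪b, x⟫ + α) + ⟪A x + b, y - x⟫
          + 1 / (2 * γ) * ‖y - x‖ ^ 2
        = (1 / 2 * ⟪Cq x, x⟫ + ⟪cq, x⟫ + βq) + 1 / (2 * γ) * ‖y - q x‖ ^ 2 := by
      intro y
      have hyq : y - q x = (y - x) + γ • (A x + b) := by
        simp only [hqdef]
        abel
      have hcm : ⟪y - x, A x + b⟫ = ⟪A x + b, y - x⟫ := real_inner_comm _ _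
      rw [hyq, @norm_add_sq_real, norm_smul, real_inner_smul_right, Real.norm_eq_abs,
        abs_of_pos hγ0, mul_pow, hquadid, hcm]
      field_simp
      ring
    rw [fbEnvelope]
    simp only [hgradf]
    have hterm : ∀ y, (((1 / 2 * ⟪A x, x⟫ + ⟪b, x⟫ + α) + ⟪A x + b, y - x⟫
          + 1 / (2 * γ) * ‖y - x‖ ^ 2 : ℝ) : EReal) + g y
        = ((1 / 2 * ⟪Cq x, x⟫ + ⟪cq, x⟫ + βq : ℝ) : EReal)
          + ((((1 / (2 * γ) * ‖y - q x‖ ^ 2 : ℝ)) : EReal) + g y) := by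
      intro y
      rw [hsq y, EReal.coe_add, add_assoc]
    have hψval : (ψ x : EReal) = ((1 / 2 * ⟪Cq x, x⟫ + ⟪cq, x⟫ + βq : ℝ) : EReal)
        + ((((1 / (2 * γ) * ‖P (q x) - q x‖ ^ 2 : ℝ)) : EReal) + g (P (q x))) := by
      rw [hgpx, ← EReal.coe_add, ← EReal.coe_add]
      norm_cast
      rw [show ψ x = (1 / 2 * ⟪Cq x, x⟫ + ⟪cq, x⟫ + βq) + envOf g γ P (q x) from rfl, henvval]
    calc (⨅ y, (((1 / 2 * ⟪A x, x⟫ + ⟪b, x⟫ + α) + ⟪A x + b, y - x⟫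
            + 1 / (2 * γ) * ‖y - x‖ ^ 2 : ℝ) : EReal) + g y)
        = ⨅ y, ((1 / 2 * ⟪Cq x, x⟫ + ⟪cq, x⟫ + βq : ℝ) : EReal)
            + ((((1 / (2 * γ) * ‖y - q x‖ ^ 2 : ℝ)) : EReal) + g y) := iInf_congr hterm
      _ = (ψ x : EReal) := by
          apply le_antisymm
          · refine le_trans (iInf_le _ (P (q x))) ?_
            rw [hψval]
          · rw [hψval]
            apply le_iInf
            intro y
            exact add_le_add le_rfl ((hP (q x)).2 y)
  · -- convexity
    exact ConvexOn.add (quad_convex Cq cq βq hCsym hCpsd) henvq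
  · -- differentiability
    exact fun x => (hψgrad x).hasFDerivAt.differentiableAt
  · -- Lipschitz gradient
    intro x y
    rw [(hψgrad x).gradient, (hψgrad y).gradient]
    have e1 : γ⁻¹ • Bop (x - P (q x)) - γ⁻¹ • Bop (y - P (q y))
        = γ⁻¹ • Bop ((x - y) - (P (q x) - P (q y))) := by
      rw [← smul_sub, ← map_sub, sub_sub_sub_comm]
    rw [e1, norm_smul, Real.norm_eq_abs, abs_of_pos (inv_pos.2 hγ0)]
    have hγlm : (0:ℝ) ≤ 1 - γ * lmin := by linarith
    have e2 : ‖Bop ((x - y) - (P (q x) - P (q y)))‖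
        ≤ (1 - γ * lmin) * (‖x - y‖ + ‖P (q x) - P (q y)‖) :=
      le_trans (hBnorm _) (mul_le_mul_of_nonneg_left (norm_sub_le _ _) hγlm)
    have e3 : ‖P (q x) - P (q y)‖ ≤ ‖x - y‖ := by
      refine le_trans (hfirm _ _) ?_
      have e4 : q x - q y = Bop (x - y) := by
        rw [hBapp]
        simp only [hqdef]
        rw [map_sub]
        module
      rw [e4]
      refine le_trans (hBnorm _) ?_
      nlinarith [norm_nonneg (x - y), mul_nonneg hγ0.le hlmin0]
    calc γ⁻¹ * ‖Bop ((x - y) - (P (q x) - P (q y)))‖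
        ≤ γ⁻¹ * ((1 - γ * lmin) * (‖x - y‖ + ‖P (q x) - P (q y)‖)) :=
          mul_le_mul_of_nonneg_left e2 (inv_pos.2 hγ0).le
      _ ≤ γ⁻¹ * ((1 - γ * lmin) * (2 * ‖x - y‖)) := by
          apply mul_le_mul_of_nonneg_left _ (inv_pos.2 hγ0).le
          apply mul_le_mul_of_nonneg_left _ hγlm
          linarith
      _ = 2 * (1 - γ * lmin) / γ * ‖x - y‖ := by
          field_simp
  · -- strong convexity
    intro _hpd
    set CK : EuclideanSpace ℝ (Fin n) →L[ℝ] EuclideanSpace ℝ (Fin n) :=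
      Cq - K • ContinuousLinearMap.id ℝ _ with hCKdef
    have hCKapp : ∀ v, CK v = Cq v - K • v := by
      intro v
      simp [hCKdef]
    have hCKsym : ∀ v w, ⟪CK v, w⟫ = ⟪v, CK w⟫ := by
      intro v w
      rw [hCKapp, hCKapp, inner_sub_left, inner_sub_right, real_inner_smul_left,
        real_inner_smul_right, hCsym]
    have hCKpsd : ∀ v, 0 ≤ ⟪CK v, v⟫ := by
      intro v
      rw [hCKapp, inner_sub_left, real_inner_smul_left, real_inner_self_eq_norm_sq]
      linarith [hKquad v]
    have hfun : (fun x => ψ x - K / 2 * ‖x‖ ^ 2)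
        = fun x => (1 / 2 * ⟪CK x, x⟫ + ⟪cq, x⟫ + βq) + envOf g γ P (q x) := by
      funext x
      have hCKq : ⟪CK x, x⟫ = ⟪Cq x, x⟫ - K * ‖x‖ ^ 2 := by
        rw [hCKapp, inner_sub_left, real_inner_smul_left, real_inner_self_eq_norm_sq]
      rw [show ψ x = (1 / 2 * ⟪Cq x, x⟫ + ⟪cq, x⟫ + βq) + envOf g γ P (q x) from rfl, hCKq]
      ring
    rw [hfun]
    exact ConvexOn.add (quad_convex CK cq βq hCKsym hCKpsd) henvq
end
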